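/- Let T be a search tree on a tree G, let U ⊆ V(G) be such that G[U] is connected, let (x,y) be an edge of T with x the parent of y, and let T' be the search tree obtained by rotating (x,y) in T. If both x and y lie in U, then the projection T'[U] is the search tree obtained by rotating the edge (x,y) in T[U]. Otherwise, T'[U] = T[U]. -/

import Mathlib

/-- A rooted tree (or the empty tree) on a subset `supp` of the vertex type `V`,
represented by parent pointers. -/
structure RTree (V : Type) where
  supp : Finset V
  parent : V → Option V
  parent_eq_none : ∀ v ∉ supp, parent v = none
  mem_of_parent : ∀ {v w : V}, parent v = some w → v ∈ supp ∧ w ∈ supp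
  root_unique : ∀ v ∈ supp, ∀ w ∈ supp, parent v = none → parent w = none → v = w
  reaches_root : ∀ v ∈ supp, ∃ r ∈ supp, parent r = none ∧
    Relation.ReflTransGen (fun a b => parent a = some b) v r

namespace RTree

variable {V : Type}

/-- `T.Anc a v` : `a` is an ancestor of `v` in `T` (possibly `a = v`). -/
def Anc (T : RTree V) (a v : V) : Prop :=
  Relation.ReflTransGen (fun x y => T.parent x = some y) v a

/-- `a` is a strict ancestor of `v`. -/
def StrictAnc (T : RTree V) (a v : V) : Prop := a ≠ v ∧ T.Anc a v

/-- The set of vertices of the subtree rooted at `a` (the descendants of `a`). -/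
def descSet (T : RTree V) (a : V) : Set V := {v | T.Anc a v}

/-- The depth of a node: the number of nodes on the path from the root to it
(the root has depth 1). -/
noncomputable def depth (T : RTree V) (v : V) : ℕ := Set.ncard {a | T.Anc a v}

def IsRoot (T : RTree V) (r : V) : Prop := r ∈ T.supp ∧ T.parent r = none

end RTree

/-- The restriction of a graph to a set of vertices (keeping the ambient vertex type). -/
def restrictG {V : Type} (G : SimpleGraph V) (U : Set V) : SimpleGraph V where
  Adj a b := G.Adj a b ∧ a ∈ U ∧ b ∈ U
  symm := ⟨by rintro a b ⟨h, ha, hb⟩; exact ⟨h.symm, hb, ha⟩⟩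
  loopless := ⟨by rintro a ⟨h, _, _⟩; exact G.irrefl h⟩

/-- `T` is a search tree on the induced subgraph `G[U]`: its nodes are the vertices of `U`,
the subtree of every node induces a connected subgraph, and every edge of `G[U]` joins
two comparable nodes of `T`. -/
def IsSTGOn {V : Type} (G : SimpleGraph V) (U : Finset V) (T : RTree V) : Prop :=
  T.supp = U ∧
  (∀ v ∈ U, ((restrictG G ↑U).induce (T.descSet v)).Connected) ∧
  (∀ u v : V, u ∈ U → v ∈ U → G.Adj u v → T.Anc u v ∨ T.Anc v u)

/-- `T` is a search tree on the graph `G`. -/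
def IsSTG {V : Type} [Fintype V] (G : SimpleGraph V) (T : RTree V) : Prop :=
  IsSTGOn G Finset.univ T

/-- `T'` is obtained from `T` by rotating the edge `(p, c)` of `T`, where `p` is
the parent of `c`: `c` replaces `p` (becoming a child of `p`'s former parent, or the
root if `p` was the root), `p` becomes a child of `c`, `p` keeps its other children,
and each child `x` of `c` whose subtree contains a vertex of `G` adjacent to `p`
becomes a child of `p` (the other children of `c` stay children of `c`). -/
def IsRotationAt {V : Type} (G : SimpleGraph V) (T T' : RTree V) (p c : V) : Prop :=
  T.parent c = some p ∧
  T'.supp = T.supp ∧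
  T'.parent c = T.parent p ∧
  T'.parent p = some c ∧
  (∀ x : V, x ≠ p → T.parent x = some c →
    ((∃ u ∈ T.descSet x, G.Adj u p) → T'.parent x = some p) ∧
    (¬(∃ u ∈ T.descSet x, G.Adj u p) → T'.parent x = some c)) ∧
  (∀ x : V, x ≠ c → x ≠ p → T.parent x ≠ some c → T'.parent x = T.parent x)

/-- `T'` is obtained from `T` by a single rotation. -/
def IsRotation {V : Type} (G : SimpleGraph V) (T T' : RTree V) : Prop :=
  ∃ p c, IsRotationAt G T T' p c

/-- `T2` can be obtained from `T1` by exactly `k` rotations. -/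
def ReachesIn {V : Type} (G : SimpleGraph V) : ℕ → RTree V → RTree V → Prop
  | 0, T1, T2 => T1 = T2
  | k+1, T1, T2 => ∃ T', IsRotation G T1 T' ∧ ReachesIn G k T' T2

/-- Vertex type of the caterpillar `C(m_1, …, m_n)`: spine vertices `inl i` and
leg vertices `inr ⟨i, j⟩`. -/
abbrev CatV (n : ℕ) (m : Fin n → ℕ) : Type := Fin n ⊕ (Σ i : Fin n, Fin (m i))

/-- The caterpillar tree `C(m_1, …, m_n)`: the spine `s_1 - s_2 - ⋯ - s_n` is a path,
and leg `ℓ_{i,j}` is adjacent to `s_i`. -/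
def caterpillar (n : ℕ) (m : Fin n → ℕ) : SimpleGraph (CatV n m) where
  Adj x y :=
    match x, y with
    | Sum.inl i, Sum.inl j => i.val + 1 = j.val ∨ j.val + 1 = i.val
    | Sum.inl i, Sum.inr l => l.1 = i
    | Sum.inr l, Sum.inl i => l.1 = i
    | Sum.inr _, Sum.inr _ => False
  symm := ⟨by rintro (i | l) (j | l') h <;> simp_all <;> tauto⟩
  loopless := ⟨by rintro (i | l) h <;> simp_all⟩

/-- The (base 2) Shannon entropy `H(m_1, …, m_n) = ∑_{i : m_i > 0} (m_i/m) log (m/m_i)`. -/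
noncomputable def shannonH {n : ℕ} (m : Fin n → ℕ) : ℝ :=
  ∑ i, if 0 < m i then
    ((m i : ℝ) / (∑ j, (m j : ℝ))) * Real.logb 2 ((∑ j, (m j : ℝ)) / (m i : ℝ))
  else 0

/-- The parent function of the search tree `A(S, π)` on the caterpillar: the legs form a
path at the top of the tree, ordered bottom-to-top according to `π`, and the spine nodes
hang below, arranged according to the BST `S`. -/
def AParent {n : ℕ} {m : Fin n → ℕ} (S : RTree (Fin n))
    (π : Fin (∑ i, m i) ≃ (Σ i : Fin n, Fin (m i))) :
    CatV n m → Option (CatV n m) :=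
  fun x => match x with
  | Sum.inl i =>
      match S.parent i with
      | some j => some (Sum.inl j)
      | none => if h : 0 < ∑ i, m i then some (Sum.inr (π ⟨0, h⟩)) else none
  | Sum.inr l =>
      if h : (π.symm l).val + 1 < ∑ i, m i then
        some (Sum.inr (π ⟨(π.symm l).val + 1, h⟩))
      else none

/-- `T = A(S, π)`. -/
def IsA {n : ℕ} {m : Fin n → ℕ} (S : RTree (Fin n))
    (π : Fin (∑ i, m i) ≃ (Σ i : Fin n, Fin (m i))) (T : RTree (CatV n m)) : Prop :=
  T.supp = Finset.univ ∧ T.parent = AParent S π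

/-- The parent function of the search tree `B(S)` on the caterpillar: every leg `ℓ_{i,j}`
is a (childless) child of `s_i`, and the spine nodes are arranged according to `S`. -/
def BParent {n : ℕ} {m : Fin n → ℕ} (S : RTree (Fin n)) :
    CatV n m → Option (CatV n m) :=
  fun x => match x with
  | Sum.inl i => (S.parent i).map Sum.inl
  | Sum.inr l => some (Sum.inl l.1)

/-- `T = B(S)`. -/
def IsB {n : ℕ} {m : Fin n → ℕ} (S : RTree (Fin n)) (T : RTree (CatV n m)) : Prop :=
  T.supp = Finset.univ ∧ T.parent = BParent S

/-- `σ(π)`: the sequence of spine indices obtained from the leg ordering `π` by replacing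
each leg `ℓ_{i,j}` with `i`. -/
def sigmaOf {n : ℕ} {m : Fin n → ℕ}
    (π : Fin (∑ i, m i) ≃ (Σ i : Fin n, Fin (m i))) : List (Fin n) :=
  List.ofFn (fun j => (π j).1)

/-- Every leg node of `T` is bound, i.e. no leg node has a child. -/
def noFreeLegs {n : ℕ} {m : Fin n → ℕ} (T : RTree (CatV n m)) : Prop :=
  ∀ (x : CatV n m) (l : Σ i : Fin n, Fin (m i)), T.parent x ≠ some (Sum.inr l)

open Classical in
/-- The number of adjacent pairs in a list satisfying `P`. -/
noncomputable def pairAlt {α : Type} (P : α → α → Prop) : List α → ℕ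
  | [] => 0
  | [_] => 0
  | a :: b :: t => (if P a b then 1 else 0) + pairAlt P (b :: t)

open Classical in
/-- Wilber's quantity `λ(S, u, σ)`: 0 if `u` has at most one child; otherwise the number
of adjacent pairs in the restriction of `σ` to the subtree of `u` that do not both lie in
the subtree of one child of `u` and are not both equal to `u`. -/
noncomputable def wilberLam {n : ℕ} (S : RTree (Fin n)) (u : Fin n) (σ : List (Fin n)) : ℕ :=
  if (∃ v w : Fin n, v ≠ w ∧ S.parent v = some u ∧ S.parent w = some u) then
    pairAlt (fun x y =>
      ¬((x = u ∧ y = u) ∨ ∃ ch, S.parent ch = some u ∧ S.Anc ch x ∧ S.Anc ch y))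
      (σ.filter (fun x => decide (S.Anc u x)))
  else 0

/-- `λ'(S, u, σ) = λ(S, u, σ)` plus the number of occurrences of `u` in `σ`. -/
noncomputable def wilberLam' {n : ℕ} (S : RTree (Fin n)) (u : Fin n)
    (σ : List (Fin n)) : ℕ :=
  wilberLam S u σ + σ.count u

/-- Wilber's first lower bound `Λ'(S, σ) = ∑_u λ'(S, u, σ)`. -/
noncomputable def wilberL' {n : ℕ} (S : RTree (Fin n)) (σ : List (Fin n)) : ℕ :=
  ∑ u : Fin n, wilberLam' S u σ

/-- `P` is the projection `T[U]` of `T` onto `U`: its nodes are the nodes of `T` in `U`,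
and the parent of `u` in `P` is the nearest strict ancestor of `u` in `T` that lies
in `U` (which is exactly the result of pruning the vertices outside `U` one by one). -/
def IsProjOn {V : Type} [DecidableEq V] (T : RTree V) (U : Finset V) (P : RTree V) : Prop :=
  P.supp = T.supp ∩ U ∧
  ∀ u w : V, P.parent u = some w ↔
    (u ∈ U ∧ w ∈ U ∧ T.StrictAnc w u ∧ ∀ z ∈ U, T.StrictAnc z u → T.Anc z w)

/-- `P` is obtained from `T` by pruning the vertex `v`. -/
def IsPruneOf {V : Type} [DecidableEq V] (T : RTree V) (v : V) (P : RTree V) : Prop :=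
  IsProjOn T (T.supp.erase v) P

/-- `PruneSeq T l P`: `P` is obtained from `T` by successively pruning the
vertices in the list `l`, in order. -/
def PruneSeq {V : Type} [DecidableEq V] : RTree V → List V → RTree V → Prop
  | T, [], P => P = T
  | T, v :: rest, P => ∃ P', IsPruneOf T v P' ∧ PruneSeq P' rest P

/-- The number of alternations (edges whose endpoints get different colors under `f`)
on the path from the root to `z`. -/
noncomputable def altAt {V K : Type} (f : V → K) (T : RTree V) (z : V) : ℕ :=
  Set.ncard {x | T.Anc x z ∧ ∃ y, T.parent x = some y ∧ f x ≠ f y}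

/-- The alternation number of `T` w.r.t. the coloring `f`: the maximum number of
alternations on a root-to-node path. -/
noncomputable def altNum {V K : Type} (f : V → K) (T : RTree V) : ℕ :=
  T.supp.sup (fun z => altAt f T z)

/-!
Both projections are read off the ancestor relation on `U`: the parent of `u` in `T[U]` is the
deepest strict ancestor of `u` in `U`. Rotating `(x, y)` changes the ancestor relation only at
`x` and `y`: `y` becomes an ancestor of everything below `x`, while `x` stops being an ancestor
of `y` and of the subtrees of the children of `y` that stay with `y`. Since `G` is a tree, a path
in `G[U]` between two vertices below a node stays below that node. If `x ∉ U` or `y ∉ U`, this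
makes all these changes invisible between vertices of `U`, so `T'[U] = T[U]`. If `x, y ∈ U`, it
shows that a child of `y` in `T[U]` moves to `x` exactly when its subtree in `T[U]` contains a
`G[U]`-neighbour of `x`, and comparing parents vertex by vertex gives the rotation of `T[U]`.
-/

namespace RTree

variable {V : Type} {T : RTree V} {a b c p v w : V}

theorem Anc.refl (v : V) : T.Anc v v := Relation.ReflTransGen.refl

theorem Anc.trans (h₁ : T.Anc a b) (h₂ : T.Anc b c) : T.Anc a c :=
  Relation.ReflTransGen.trans h₂ h₁

theorem Anc.of_parent (h : T.parent c = some p) : T.Anc p c :=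
  Relation.ReflTransGen.single h

theorem Anc.eq_or_exists_parent (h : T.Anc a v) :
    a = v ∨ ∃ b, T.parent v = some b ∧ T.Anc a b := by
  rcases Relation.ReflTransGen.cases_head h with h | ⟨b, hb, h⟩
  · exact Or.inl h.symm
  · exact Or.inr ⟨b, hb, h⟩

theorem Anc.total (h₁ : T.Anc a v) (h₂ : T.Anc b v) : T.Anc a b ∨ T.Anc b a := by
  have hfun : Relator.RightUnique (fun x y => T.parent x = some y) := fun _ _ _ hy hz =>
    Option.some.inj (hy.symm.trans hz)
  exact (Relation.ReflTransGen.total_of_right_unique hfun h₁ h₂).symm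

/-- Every ancestor chain of a node of `T.supp` ends at the parentless root, so it cannot cycle. -/
theorem Anc.antisymm (h₁ : T.Anc a v) (h₂ : T.Anc v a) : a = v := by
  by_cases hv : v ∈ T.supp
  · obtain ⟨r, -, hr, hvr⟩ := T.reaches_root v hv
    clear hv
    induction hvr using Relation.ReflTransGen.head_induction_on generalizing a with
    | refl =>
      rcases h₁.eq_or_exists_parent with h | ⟨b, hb, -⟩
      · exact h
      · simp [hr] at hb
    | @head c d hcd _ ih =>
      rcases h₁.eq_or_exists_parent with h | ⟨b, hb, hab⟩
      · exact h
      · obtain rfl : b = d := Option.some.inj (hb.symm.trans hcd)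
        obtain rfl : a = b := ih hab ((Anc.of_parent hcd).trans h₂)
        exact (ih h₂ (Anc.of_parent hcd)).symm
  · rcases h₁.eq_or_exists_parent with h | ⟨b, hb, -⟩
    · exact h
    · simp [T.parent_eq_none v hv] at hb

theorem parent_ne_self (v : V) : T.parent v ≠ some v := by
  intro h
  obtain ⟨r, -, hr, hvr⟩ := T.reaches_root v (T.mem_of_parent h).1
  induction hvr using Relation.ReflTransGen.head_induction_on with
  | refl => simp [hr] at h
  | @head c d hcd _ ih =>
    obtain rfl : d = c := Option.some.inj (hcd.symm.trans h)
    exact ih h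

theorem StrictAnc.anc (h : T.StrictAnc a v) : T.Anc a v := h.2

theorem StrictAnc.ne (h : T.StrictAnc a v) : a ≠ v := h.1

theorem anc_iff_eq_or_strictAnc : T.Anc a v ↔ a = v ∨ T.StrictAnc a v :=
  ⟨fun h => (em (a = v)).imp id (⟨·, h⟩), by rintro (rfl | h); exacts [Anc.refl a, h.anc]⟩

theorem StrictAnc.of_parent (h : T.parent c = some p) : T.StrictAnc p c :=
  ⟨fun hpc => parent_ne_self c (hpc ▸ h), Anc.of_parent h⟩

theorem not_anc_of_parent (h : T.parent c = some p) : ¬ T.Anc c p := fun hcp =>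
  (StrictAnc.of_parent h).ne (Anc.antisymm (Anc.of_parent h) hcp)

theorem StrictAnc.anc_of_parent (h : T.StrictAnc a c) (hc : T.parent c = some p) :
    T.Anc a p := by
  rcases h.anc.eq_or_exists_parent with h' | ⟨b, hb, hab⟩
  · exact absurd h' h.ne
  · rwa [Option.some.inj (hc.symm.trans hb)]

theorem StrictAnc.exists_child (h : T.StrictAnc w v) :
    ∃ c, T.parent c = some w ∧ T.Anc c v := by
  obtain ⟨hne, h⟩ := h
  induction h using Relation.ReflTransGen.head_induction_on with
  | refl => exact absurd rfl hne
  | @head u b hub hbw ih =>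
    by_cases hbw' : b = w
    · exact ⟨u, hbw' ▸ hub, Anc.refl u⟩
    · obtain ⟨c, hc, hcb⟩ := ih (Ne.symm hbw')
      exact ⟨c, hc, hcb.trans (Anc.of_parent hub)⟩

theorem eq_of_parent_eq_of_anc {c₁ c₂ : V} (h₁ : T.parent c₁ = some p)
    (h₂ : T.parent c₂ = some p) (hv₁ : T.Anc c₁ v) (hv₂ : T.Anc c₂ v) :
    c₁ = c₂ := by
  by_contra hne
  rcases hv₁.total hv₂ with h | h
  · exact not_anc_of_parent h₁ (StrictAnc.anc_of_parent ⟨hne, h⟩ h₂)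
  · exact not_anc_of_parent h₂ (StrictAnc.anc_of_parent ⟨Ne.symm hne, h⟩ h₁)

theorem depth_lt_depth (h : T.StrictAnc a v) : T.depth a < T.depth v := by
  have hfin : {b | T.Anc b v}.Finite := by
    refine (T.supp.finite_toSet.insert v).subset fun b hb => ?_
    induction hb with
    | refl => exact Set.mem_insert _ _
    | tail _ hstep _ => exact Set.mem_insert_of_mem _ (T.mem_of_parent hstep).2
  refine Set.ncard_lt_ncard ⟨fun b hb => Anc.trans hb h.anc, fun hsub => h.ne ?_⟩ hfin
  exact Anc.antisymm h.anc (hsub (Anc.refl v))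

theorem ext {T₁ T₂ : RTree V} (hs : T₁.supp = T₂.supp) (hp : T₁.parent = T₂.parent) :
    T₁ = T₂ := by
  cases T₁; cases T₂
  cases hs; cases hp
  rfl

end RTree

namespace SimpleGraph

variable {V : Type} {G : SimpleGraph V} {W W' : Set V}

theorem IsAcyclic.support_subset_of_induce_connected (hG : G.IsAcyclic)
    (hW : (G.induce W).Connected) {a b : V} (ha : a ∈ W) (hb : b ∈ W) {p : G.Walk a b}
    (hp : p.IsPath) : ∀ v ∈ p.support, v ∈ W := by
  classical
  obtain ⟨q⟩ := hW.preconnected ⟨a, ha⟩ ⟨b, hb⟩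
  obtain rfl : p = (q.map (Embedding.induce W).toHom).bypass :=
    congrArg Subtype.val ((hG.subsingleton_path a b).elim ⟨p, hp⟩ ⟨_, Walk.bypass_isPath _⟩)
  intro v hv
  have hv' := Walk.support_bypass_subset_support _ hv
  erw [Walk.support_map] at hv'
  obtain ⟨u, -, rfl⟩ := List.mem_map.mp hv'
  exact u.2

/-- The path `x, u, …, v` through `W` is the unique path from `x` to `v`. -/
theorem IsAcyclic.mem_of_adj_of_induce_connected (hG : G.IsAcyclic)
    (hW : (G.induce W).Connected) (hW' : (G.induce W').Connected) {x u v : V}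
    (hx : x ∈ W') (hxW : x ∉ W) (hu : u ∈ W) (hxu : G.Adj x u) (hv : v ∈ W)
    (hv' : v ∈ W') : u ∈ W' := by
  obtain ⟨q, hq⟩ : ∃ q : G.Walk u v, q.IsPath :=
    ((hW.preconnected ⟨u, hu⟩ ⟨v, hv⟩).map (Embedding.induce W).toHom).exists_isPath
  have hqW := hG.support_subset_of_induce_connected hW hu hv hq
  have hp : (Walk.cons hxu q).IsPath :=
    (Walk.cons_isPath_iff hxu q).mpr ⟨hq, fun h => hxW (hqW x h)⟩
  exact hG.support_subset_of_induce_connected hW' hx hv' hp u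
    (List.mem_cons_of_mem x q.start_mem_support)

end SimpleGraph

section SearchTree

open RTree

variable {V : Type} [Fintype V] {G : SimpleGraph V} {T : RTree V} {W : Set V} {U : Finset V}
  {c p u : V}

theorem IsSTG.connected_descSet (hT : IsSTG G T) (v : V) :
    (G.induce (T.descSet v)).Connected := by
  have h := hT.2.1 v (Finset.mem_univ v)
  rwa [show restrictG G ↑(Finset.univ : Finset V) = G by ext; simp [restrictG]] at h

theorem IsSTG.strictAnc_of_adj (hT : IsSTG G T) {s c d : V} (hc : T.Anc s c) (hd : ¬ T.Anc s d)
    (hcd : G.Adj c d) : T.StrictAnc d s := by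
  rcases hT.2.2 c d (Finset.mem_univ c) (Finset.mem_univ d) hcd with h | h
  · exact absurd (hc.trans h) hd
  · rcases h.total hc with h' | h'
    · exact ⟨fun hds => hd (hds ▸ Anc.refl d), h'⟩
    · exact absurd h' hd

/-- The path from `a` to `b` stays below `m` since `G` is a tree; where it leaves the subtree
of `c`, it steps to a strict ancestor of `c`. -/
theorem IsSTG.exists_strictAnc_mem_of_induce_connected (hG : G.IsTree) (hT : IsSTG G T)
    (hW : (G.induce W).Connected) {m c a b : V} (hmc : T.Anc m c) (ha : a ∈ W) (hca : T.Anc c a)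
    (hb : b ∈ W) (hmb : T.Anc m b) (hcb : ¬ T.Anc c b) :
    ∃ e f, f ∈ W ∧ G.Adj e f ∧ T.Anc c e ∧ T.StrictAnc f c ∧ T.Anc m f := by
  obtain ⟨p, hp⟩ := hG.connected.preconnected.exists_isPath a b
  have hpW := hG.isAcyclic.support_subset_of_induce_connected hW ha hb hp
  have hpm := hG.isAcyclic.support_subset_of_induce_connected (hT.connected_descSet m)
    (hmc.trans hca) hmb hp
  obtain ⟨d, hd, hdc, hdc'⟩ := p.exists_boundary_dart (T.descSet c) hca hcb
  have hsnd := p.dart_snd_mem_support_of_mem_darts hd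
  exact ⟨d.fst, d.snd, hpW _ hsnd, d.adj, hdc, hT.strictAnc_of_adj hdc hdc' d.adj, hpm _ hsnd⟩

theorem IsSTG.mem_of_induce_connected (hG : G.IsTree) (hT : IsSTG G T)
    (hW : (G.induce W).Connected) {p c a b : V} (hc : T.parent c = some p) (ha : a ∈ W)
    (hca : T.Anc c a) (hb : b ∈ W) (hpb : T.Anc p b) (hcb : ¬ T.Anc c b) : p ∈ W := by
  obtain ⟨-, f, hf, -, -, hfc, hpf⟩ :=
    hT.exists_strictAnc_mem_of_induce_connected hG hW (Anc.of_parent hc) ha hca hb hpb hcb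
  rwa [← Anc.antisymm (hfc.anc_of_parent hc) hpf]

theorem IsSTG.anc_of_mem_of_parent_not_mem (hG : G.IsTree) (hT : IsSTG G T)
    (hU : (G.induce (↑U : Set V)).Connected) (hc : T.parent c = some p) (hcU : c ∈ U)
    (hpU : p ∉ U) (hu : u ∈ U) (hpu : T.Anc p u) : T.Anc c u := by
  obtain ⟨c', hc', hc'u⟩ := StrictAnc.exists_child ⟨by rintro rfl; exact hpU hu, hpu⟩
  by_cases hcc' : c' = c
  · exact hcc' ▸ hc'u
  refine absurd (hT.mem_of_induce_connected hG hU hc' hu hc'u hcU (Anc.of_parent hc) ?_) hpU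
  exact fun h => not_anc_of_parent hc' (StrictAnc.anc_of_parent ⟨hcc', h⟩ hc)

end SearchTree

namespace IsProjOn

open RTree

variable {V : Type} [DecidableEq V] {T T' P P' : RTree V} {U : Finset V} {u w z : V}

theorem parent_eq_none_of_not_mem (hP : IsProjOn T U P) (hz : z ∉ U) : P.parent z = none :=
  Option.eq_none_iff_forall_ne_some.mpr fun w h => hz ((hP.2 z w).mp h).1

theorem parent_eq_some_of_parent (hP : IsProjOn T U P) (hu : u ∈ U) (hw : w ∈ U)
    (h : T.parent u = some w) : P.parent u = some w :=
  (hP.2 u w).mpr ⟨hu, hw, StrictAnc.of_parent h, fun _ _ hzu => hzu.anc_of_parent h⟩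

/-- The parent in `P` is the deepest strict ancestor in `U`. -/
theorem exists_parent_eq_some (hP : IsProjOn T U P) (hu : u ∈ U) (hw : w ∈ U)
    (hwu : T.StrictAnc w u) : ∃ m, P.parent u = some m := by
  classical
  obtain ⟨m, hm, hmax⟩ := (U.filter (T.StrictAnc · u)).exists_max_image T.depth
    ⟨w, Finset.mem_filter.mpr ⟨hw, hwu⟩⟩
  obtain ⟨hmU, hmu⟩ := Finset.mem_filter.mp hm
  refine ⟨m, (hP.2 u m).mpr ⟨hu, hmU, hmu, fun v hv hvu => ?_⟩⟩
  rcases hvu.anc.total hmu.anc with h | h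
  · exact h
  · by_contra hvm
    have := hmax v (Finset.mem_filter.mpr ⟨hv, hvu⟩)
    exact absurd (depth_lt_depth ⟨by rintro rfl; exact hvm (Anc.refl _), h⟩) (not_lt.mpr this)

theorem anc_of_anc (hP : IsProjOn T U P) (h : P.Anc w u) : T.Anc w u := by
  induction h with
  | refl => exact Anc.refl _
  | tail _ hstep ih => exact ((hP.2 _ _).mp hstep).2.2.1.anc.trans ih

theorem anc_iff (hP : IsProjOn T U P) (hu : u ∈ T.supp) (huU : u ∈ U) (hw : w ∈ U) :
    P.Anc w u ↔ T.Anc w u := by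
  refine ⟨hP.anc_of_anc, fun h => ?_⟩
  obtain ⟨r, -, hr, hur⟩ := P.reaches_root u (hP.1 ▸ Finset.mem_inter.mpr ⟨hu, huU⟩)
  clear hu
  induction hur using Relation.ReflTransGen.head_induction_on with
  | refl =>
    by_contra hwr
    obtain ⟨m, hm⟩ := hP.exists_parent_eq_some huU hw ⟨fun h' => hwr (h' ▸ Anc.refl w), h⟩
    simp [hr] at hm
  | @head c d hcd _ ih =>
    by_cases hwc : w = c
    · exact hwc ▸ Anc.refl w
    · obtain ⟨-, hdU, -, hmin⟩ := (hP.2 c d).mp hcd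
      exact (ih hdU (hmin w hw ⟨hwc, h⟩)).trans (Anc.of_parent hcd)

theorem parent_congr (hP : IsProjOn T U P) (hP' : IsProjOn T' U P') {z' : V} (hz : z ∈ U)
    (hz' : z' ∈ U) (hA : ∀ v ∈ U, T'.StrictAnc v z' ↔ T.StrictAnc v z)
    (hO : ∀ v ∈ U, ∀ w ∈ U, T.StrictAnc v z → T.StrictAnc w z →
      (T'.Anc v w ↔ T.Anc v w)) :
    P'.parent z' = P.parent z := by
  refine Option.ext fun w => ?_
  rw [hP'.2, hP.2]
  constructor
  · rintro ⟨-, hw, hwz, hmin⟩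
    have hwz' := (hA w hw).mp hwz
    exact ⟨hz, hw, hwz', fun v hv hvz =>
      (hO v hv w hw hvz hwz').mp (hmin v hv ((hA v hv).mpr hvz))⟩
  · rintro ⟨-, hw, hwz, hmin⟩
    exact ⟨hz', hw, (hA w hw).mpr hwz, fun v hv hvz =>
      (hO v hv w hw ((hA v hv).mp hvz) hwz).mpr (hmin v hv ((hA v hv).mp hvz))⟩

theorem eq_of_strictAnc_iff (hP : IsProjOn T U P) (hP' : IsProjOn T' U P')
    (hs : T'.supp = T.supp) (h : ∀ u ∈ U, ∀ v ∈ U, T'.StrictAnc v u ↔ T.StrictAnc v u) :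
    P' = P := by
  refine RTree.ext (by rw [hP'.1, hP.1, hs]) (funext fun z => ?_)
  by_cases hz : z ∈ U
  · refine hP.parent_congr hP' hz hz (fun v hv => h z hz v hv) fun v hv w hw _ _ => ?_
    rw [anc_iff_eq_or_strictAnc, anc_iff_eq_or_strictAnc, h w hw v hv]
  · rw [hP'.parent_eq_none_of_not_mem hz, hP.parent_eq_none_of_not_mem hz]

end IsProjOn

section Rotation

open RTree

variable {V : Type} {G : SimpleGraph V} {T T' : RTree V} {x y a b v : V}

/-- `v` lies below a child of `y` that stays a child of `y` when the edge `(x, y)` is rotated. -/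
def InStaySubtree (G : SimpleGraph V) (T : RTree V) (x y v : V) : Prop :=
  ∃ z, T.parent z = some y ∧ (¬∃ u ∈ T.descSet z, G.Adj u x) ∧ T.Anc z v

theorem InStaySubtree.strictAnc (h : InStaySubtree G T x y v) : T.StrictAnc y v := by
  obtain ⟨z, hz, -, hzv⟩ := h
  exact ⟨by rintro rfl; exact not_anc_of_parent hz hzv, (Anc.of_parent hz).trans hzv⟩

theorem InStaySubtree.of_anc (h : InStaySubtree G T x y a) (hav : T.Anc a v) :
    InStaySubtree G T x y v := by
  obtain ⟨z, hz, hzm, hza⟩ := h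
  exact ⟨z, hz, hzm, hza.trans hav⟩

variable (hrot : IsRotationAt G T T' x y)
include hrot

theorem IsRotationAt.ne_of_parent_eq (hv : T.parent v = some y) : v ≠ x := by
  rintro rfl
  exact not_anc_of_parent hrot.1 (Anc.of_parent hv)

theorem IsRotationAt.ne_child_of_anc (h : T.Anc v x) : v ≠ y := by
  rintro rfl
  exact not_anc_of_parent hrot.1 h

theorem IsRotationAt.not_inStaySubtree_self : ¬ InStaySubtree G T x y x := fun h =>
  not_anc_of_parent hrot.1 h.strictAnc.anc

theorem IsRotationAt.anc_of_rotated_parent (h : T'.parent v = some b) (hvx : v ≠ x) :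
    T.Anc b v := by
  by_cases hvy : v = y
  · rw [hvy, hrot.2.2.1] at h
    exact hvy ▸ (Anc.of_parent h).trans (Anc.of_parent hrot.1)
  by_cases hpv : T.parent v = some y
  · obtain ⟨hmoved, hstays⟩ := hrot.2.2.2.2.1 v hvx hpv
    by_cases hm : ∃ u ∈ T.descSet v, G.Adj u x
    · rw [hmoved hm, Option.some.injEq] at h
      exact h ▸ (Anc.of_parent hrot.1).trans (Anc.of_parent hpv)
    · rw [hstays hm, Option.some.injEq] at h
      exact h ▸ Anc.of_parent hpv
  · rw [hrot.2.2.2.2.2 v hvy hvx hpv] at h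
    exact Anc.of_parent h

theorem IsRotationAt.rotated_anc_of_parent (h : T.parent v = some b) (hvy : v ≠ y) :
    T'.Anc b v := by
  by_cases hvx : v = x
  · rw [hvx, ← hrot.2.2.1] at h
    exact hvx ▸ (Anc.of_parent h).trans (Anc.of_parent hrot.2.2.2.1)
  by_cases hby : b = y
  · rw [hby] at h ⊢
    obtain ⟨hmoved, hstays⟩ := hrot.2.2.2.2.1 v hvx h
    by_cases hm : ∃ u ∈ T.descSet v, G.Adj u x
    · exact (Anc.of_parent hrot.2.2.2.1).trans (Anc.of_parent (hmoved hm))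
    · exact Anc.of_parent (hstays hm)
  · have hpv : T.parent v ≠ some y := fun h' => hby (Option.some.inj (h.symm.trans h'))
    exact Anc.of_parent ((hrot.2.2.2.2.2 v hvy hvx hpv).trans h)

theorem IsRotationAt.rotated_anc_iff_of_ne (hax : a ≠ x) (hay : a ≠ y) :
    T'.Anc a v ↔ T.Anc a v := by
  constructor
  · intro h
    induction h using Relation.ReflTransGen.head_induction_on with
    | refl => exact Anc.refl a
    | @head v b hvb _ ih =>
      by_cases hvx : v = x
      · rw [hvx, hrot.2.2.2.1, Option.some.injEq] at hvb
        exact hvx ▸ StrictAnc.anc_of_parent ⟨hay, hvb ▸ ih⟩ hrot.1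
      · exact ih.trans (hrot.anc_of_rotated_parent hvb hvx)
  · intro h
    induction h using Relation.ReflTransGen.head_induction_on with
    | refl => exact Anc.refl a
    | @head v b hvb _ ih =>
      by_cases hvy : v = y
      · rw [hvy, hrot.1, Option.some.injEq] at hvb
        exact hvy ▸ StrictAnc.anc_of_parent ⟨hax, hvb ▸ ih⟩ hrot.2.2.2.1
      · exact ih.trans (hrot.rotated_anc_of_parent hvb hvy)

theorem IsRotationAt.rotated_anc_child_iff : T'.Anc y v ↔ T.Anc x v := by
  constructor
  · intro h
    induction h using Relation.ReflTransGen.head_induction_on with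
    | refl => exact Anc.of_parent hrot.1
    | @head v b hvb _ ih =>
      by_cases hvx : v = x
      · rw [hvx]
        exact Anc.refl x
      · exact ih.trans (hrot.anc_of_rotated_parent hvb hvx)
  · intro h
    induction h using Relation.ReflTransGen.head_induction_on with
    | refl => exact Anc.of_parent hrot.2.2.2.1
    | @head v b hvb _ ih =>
      by_cases hvy : v = y
      · rw [hvy]
        exact Anc.refl y
      · exact ih.trans (hrot.rotated_anc_of_parent hvb hvy)

theorem IsRotationAt.rotated_anc_parent_iff :
    T'.Anc x v ↔ T.Anc x v ∧ v ≠ y ∧ ¬ InStaySubtree G T x y v := by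
  have hself : T.Anc x x ∧ x ≠ y ∧ ¬ InStaySubtree G T x y x :=
    ⟨Anc.refl x, (StrictAnc.of_parent hrot.1).ne, hrot.not_inStaySubtree_self⟩
  constructor
  · intro h
    induction h using Relation.ReflTransGen.head_induction_on with
    | refl => exact hself
    | @head v b hvb _ ih =>
      obtain ⟨hxb, hby, hsb⟩ := ih
      by_cases hvx : v = x
      · exact hvx ▸ hself
      have hvy : v ≠ y := by
        rintro rfl
        rw [hrot.2.2.1] at hvb
        exact not_anc_of_parent hvb hxb
      refine ⟨hxb.trans (hrot.anc_of_rotated_parent hvb hvx), hvy, ?_⟩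
      rintro ⟨z, hz, hzm, hzv⟩
      by_cases hzv' : z = v
      · rw [← hzv', (hrot.2.2.2.2.1 z (hrot.ne_of_parent_eq hz) hz).2 hzm] at hvb
        exact hby (Option.some.inj hvb).symm
      · have hpv : T.parent v ≠ some y := fun h =>
          hzv' (eq_of_parent_eq_of_anc hz h hzv (Anc.refl v))
        rw [hrot.2.2.2.2.2 v hvy hvx hpv] at hvb
        exact hsb ⟨z, hz, hzm, StrictAnc.anc_of_parent ⟨hzv', hzv⟩ hvb⟩
  · rintro ⟨h, hvy, hsv⟩
    induction h using Relation.ReflTransGen.head_induction_on with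
    | refl => exact Anc.refl x
    | @head v b hvb _ ih =>
      by_cases hby : b = y
      · rw [hby] at hvb
        have hm : ∃ u ∈ T.descSet v, G.Adj u x := by
          by_contra hm
          exact hsv ⟨v, hvb, hm, Anc.refl v⟩
        exact Anc.of_parent ((hrot.2.2.2.2.1 v (hrot.ne_of_parent_eq hvb) hvb).1 hm)
      · exact (ih hby fun hsb => hsv (hsb.of_anc (Anc.of_parent hvb))).trans
          (hrot.rotated_anc_of_parent hvb hvy)

theorem IsRotationAt.rotated_strictAnc_child_iff : T'.StrictAnc v y ↔ T.StrictAnc v x := by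
  by_cases hvy : v = y
  · subst hvy
    exact iff_of_false (fun h => h.ne rfl) fun h => hrot.ne_child_of_anc h.anc rfl
  by_cases hvx : v = x
  · subst hvx
    exact iff_of_false (fun h => (hrot.rotated_anc_parent_iff.mp h.anc).2.1 rfl) fun h => h.ne rfl
  rw [StrictAnc, StrictAnc, hrot.rotated_anc_iff_of_ne hvx hvy]
  exact ⟨fun h => ⟨hvx, StrictAnc.anc_of_parent h hrot.1⟩,
    fun h => ⟨hvy, h.2.trans (Anc.of_parent hrot.1)⟩⟩

end Rotation

section SearchTreeRotation

open RTree

variable {V : Type} [Fintype V] {G : SimpleGraph V} {T T' P : RTree V} {U : Finset V}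
  {c u x y z : V}

/-- Otherwise the path in `U` from `z` to `u` leaves the subtree of `z` through a vertex of `U`
strictly between `w` and `z`. -/
theorem IsSTG.anc_of_mem_of_proj_parent [DecidableEq V] (hG : G.IsTree) (hT : IsSTG G T)
    (hU : (G.induce (↑U : Set V)).Connected) (hP : IsProjOn T U P) {w : V}
    (hz : P.parent z = some w) (hc : T.parent c = some w) (hcz : T.Anc c z) (hu : u ∈ U)
    (hcu : T.Anc c u) : T.Anc z u := by
  by_contra hzu
  obtain ⟨hzU, -, -, hmin⟩ := (hP.2 z w).mp hz
  obtain ⟨-, f, hf, -, -, hfz, hcf⟩ :=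
    hT.exists_strictAnc_mem_of_induce_connected hG hU hcz hzU (Anc.refl z) hu hcu hzu
  exact not_anc_of_parent hc (hcf.trans (hmin f hf hfz))

theorem IsSTG.not_inStaySubtree_of_mem (hG : G.IsTree) (hT : IsSTG G T)
    (hU : (G.induce (↑U : Set V)).Connected) (hxy : T.parent y = some x)
    (hxU : x ∈ U) (hyU : y ∉ U) (hu : u ∈ U) : ¬ InStaySubtree G T x y u := by
  rintro ⟨z, hz, hzm, hzu⟩
  obtain ⟨e, f, hf, hef, hze, hfz, hxf⟩ := hT.exists_strictAnc_mem_of_induce_connected hG hU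
    ((Anc.of_parent hxy).trans (Anc.of_parent hz)) hu hzu hxU (Anc.refl x)
    fun h => not_anc_of_parent hz (h.trans (Anc.of_parent hxy))
  by_cases hfy : f = y
  · exact hyU (hfy ▸ hf)
  · have hfx := Anc.antisymm (StrictAnc.anc_of_parent ⟨hfy, hfz.anc_of_parent hz⟩ hxy) hxf
    exact hzm ⟨e, hze, hfx ▸ hef⟩

theorem IsSTG.inStaySubtree_iff [DecidableEq V] (hG : G.IsTree) (hT : IsSTG G T)
    (hU : (G.induce (↑U : Set V)).Connected) (hP : IsProjOn T U P) (hxy : T.parent y = some x)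
    (hxU : x ∈ U) (hz : P.parent z = some y) :
    InStaySubtree G T x y z ↔ ¬∃ u ∈ P.descSet z, (restrictG G ↑U).Adj u x := by
  constructor
  · rintro ⟨z₁, -, hm, hz₁z⟩ ⟨u, hu, hux⟩
    exact hm ⟨u, hz₁z.trans (hP.anc_of_anc hu), hux.1⟩
  · intro hne
    obtain ⟨hzU, -, hyz, -⟩ := (hP.2 z y).mp hz
    obtain ⟨z₀, hz₀, hz₀z⟩ := hyz.exists_child
    refine ⟨z₀, hz₀, ?_, hz₀z⟩
    rintro ⟨u, hu, hux⟩
    have huU : u ∈ U := hG.isAcyclic.mem_of_adj_of_induce_connected (hT.connected_descSet z₀)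
      hU hxU (fun h => not_anc_of_parent hz₀ (h.trans (Anc.of_parent hxy))) hu hux.symm hz₀z hzU
    have hzu := hT.anc_of_mem_of_proj_parent hG hU hP hz hz₀ hz₀z huU hu
    exact hne ⟨u, (hP.anc_iff (hT.1 ▸ Finset.mem_univ u) huU hzU).mpr hzu, hux, huU, hxU⟩

theorem IsRotationAt.rotated_strictAnc_iff_of_not_mem (hrot : IsRotationAt G T T' x y)
    (hG : G.IsTree) (hT : IsSTG G T) (hU : (G.induce (↑U : Set V)).Connected)
    (hxy : x ∉ U ∨ y ∉ U) {v : V} (hu : u ∈ U) (hv : v ∈ U) :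
    T'.StrictAnc v u ↔ T.StrictAnc v u := by
  by_cases hvy : v = y
  · rw [hvy] at hv ⊢
    have hxU := hxy.resolve_right (not_not.mpr hv)
    rw [StrictAnc, StrictAnc, hrot.rotated_anc_child_iff]
    exact and_congr_right fun _ =>
      ⟨hT.anc_of_mem_of_parent_not_mem hG hU hrot.1 hv hxU hu, (Anc.of_parent hrot.1).trans⟩
  by_cases hvx : v = x
  · rw [hvx] at hv ⊢
    have hyU := hxy.resolve_left (not_not.mpr hv)
    rw [StrictAnc, StrictAnc, hrot.rotated_anc_parent_iff]
    exact and_congr_right fun _ => ⟨And.left, fun h => ⟨h, by rintro rfl; exact hyU hu,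
      hT.not_inStaySubtree_of_mem hG hU hrot.1 hv hyU hu⟩⟩
  · rw [StrictAnc, StrictAnc, hrot.rotated_anc_iff_of_ne hvx hvy]

end SearchTreeRotation

section ProjRotation

open RTree

variable {V : Type} [DecidableEq V] {G : SimpleGraph V} {T T' P P' : RTree V} {U : Finset V}
  {x y z : V}

theorem IsRotationAt.proj_parent_child (hrot : IsRotationAt G T T' x y) (hP : IsProjOn T U P)
    (hP' : IsProjOn T' U P') (hxU : x ∈ U) (hyU : y ∈ U) : P'.parent y = P.parent x :=
  hP.parent_congr hP' hxU hyU (fun _ _ => hrot.rotated_strictAnc_child_iff) fun _ _ _ _ hv _ =>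
    hrot.rotated_anc_iff_of_ne hv.ne (hrot.ne_child_of_anc hv.anc)

theorem IsRotationAt.proj_parent_of_inStaySubtree (hrot : IsRotationAt G T T' x y)
    (hP : IsProjOn T U P) (hP' : IsProjOn T' U P') (hyU : y ∈ U) (hz : P.parent z = some y)
    (hs : InStaySubtree G T x y z) : P'.parent z = some y := by
  obtain ⟨hzU, -, hyz, hmin⟩ := (hP.2 z y).mp hz
  refine (hP'.2 z y).mpr ⟨hzU, hyU, ⟨hyz.ne, hrot.rotated_anc_child_iff.mpr
    ((Anc.of_parent hrot.1).trans hyz.anc)⟩, fun v hv hvz => ?_⟩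
  by_cases hvx : v = x
  · exact absurd hs (hrot.rotated_anc_parent_iff.mp (hvx ▸ hvz.anc)).2.2
  by_cases hvy : v = y
  · rw [hvy]
    exact Anc.refl y
  exact (hrot.rotated_anc_iff_of_ne hvx hvy).mpr
    (hmin v hv ⟨hvz.ne, (hrot.rotated_anc_iff_of_ne hvx hvy).mp hvz.anc⟩)

theorem IsRotationAt.proj_parent_of_not_inStaySubtree (hrot : IsRotationAt G T T' x y)
    (hP : IsProjOn T U P) (hP' : IsProjOn T' U P') (hxU : x ∈ U) (hz : P.parent z = some y)
    (hs : ¬ InStaySubtree G T x y z) : P'.parent z = some x := by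
  obtain ⟨hzU, -, hyz, hmin⟩ := (hP.2 z y).mp hz
  have hxz : T.StrictAnc x z :=
    ⟨by rintro rfl; exact not_anc_of_parent hrot.1 hyz.anc,
      (Anc.of_parent hrot.1).trans hyz.anc⟩
  refine (hP'.2 z x).mpr ⟨hzU, hxU, ⟨hxz.ne, hrot.rotated_anc_parent_iff.mpr
    ⟨hxz.anc, hyz.ne.symm, hs⟩⟩, fun v hv hvz => ?_⟩
  by_cases hvx : v = x
  · rw [hvx]
    exact Anc.refl x
  by_cases hvy : v = y
  · exact hvy ▸ Anc.of_parent hrot.2.2.2.1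
  exact (hrot.rotated_anc_iff_of_ne hvx hvy).mpr <| StrictAnc.anc_of_parent
    ⟨hvy, hmin v hv ⟨hvz.ne, (hrot.rotated_anc_iff_of_ne hvx hvy).mp hvz.anc⟩⟩ hrot.1

theorem IsRotationAt.proj_parent_of_ne (hrot : IsRotationAt G T T' x y) (hP : IsProjOn T U P)
    (hP' : IsProjOn T' U P') (hxU : x ∈ U) (hyU : y ∈ U) (hzx : z ≠ x) (hzy : z ≠ y)
    (hPz : P.parent z ≠ some y) : P'.parent z = P.parent z := by
  rcases hw : P.parent z with _ | w
  · refine Option.eq_none_iff_forall_ne_some.mpr fun w hw' => ?_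
    obtain ⟨hzU, hwU, hwz, -⟩ := (hP'.2 z w).mp hw'
    have : ∃ v ∈ U, T.StrictAnc v z := by
      by_cases hwx : w = x
      · exact ⟨x, hxU, hzx.symm, (hrot.rotated_anc_parent_iff.mp (hwx ▸ hwz.anc)).1⟩
      by_cases hwy : w = y
      · exact ⟨x, hxU, hzx.symm, hrot.rotated_anc_child_iff.mp (hwy ▸ hwz.anc)⟩
      exact ⟨w, hwU, hwz.ne, (hrot.rotated_anc_iff_of_ne hwx hwy).mp hwz.anc⟩
    obtain ⟨v, hvU, hvz⟩ := this
    obtain ⟨m, hm⟩ := hP.exists_parent_eq_some hzU hvU hvz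
    simp [hw] at hm
  obtain ⟨hzU, hwU, hwz, hmin⟩ := (hP.2 z w).mp hw
  have hwy : w ≠ y := fun h => hPz (hw.trans (h ▸ rfl))
  refine (hP'.2 z w).mpr ⟨hzU, hwU, ⟨hwz.ne, ?_⟩, fun v hv hvz => ?_⟩
  · by_cases hwx : w = x
    · refine hwx ▸ hrot.rotated_anc_parent_iff.mpr ⟨hwx ▸ hwz.anc, hzy, fun hs => ?_⟩
      exact not_anc_of_parent hrot.1 (hwx ▸ hmin y hyU hs.strictAnc)
    · exact (hrot.rotated_anc_iff_of_ne hwx hwy).mpr hwz.anc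
  by_cases hvx : v = x
  · obtain ⟨hxz, -, hsz⟩ := hrot.rotated_anc_parent_iff.mp (hvx ▸ hvz.anc)
    exact hvx ▸ hrot.rotated_anc_parent_iff.mpr
      ⟨hmin x hxU ⟨hzx.symm, hxz⟩, hwy, fun hs => hsz (hs.of_anc hwz.anc)⟩
  by_cases hvy : v = y
  · exact hvy ▸ hrot.rotated_anc_child_iff.mpr
      (hmin x hxU ⟨hzx.symm, hrot.rotated_anc_child_iff.mp (hvy ▸ hvz.anc)⟩)
  exact (hrot.rotated_anc_iff_of_ne hvx hvy).mpr
    (hmin v hv ⟨hvz.ne, (hrot.rotated_anc_iff_of_ne hvx hvy).mp hvz.anc⟩)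

end ProjRotation

theorem projection_rotation_general {V : Type} [Fintype V] [DecidableEq V]
    (G : SimpleGraph V) (hG : G.IsTree)
    (T T' : RTree V) (hT : IsSTG G T)
    (U : Finset V) (hU : (G.induce (↑U : Set V)).Connected)
    (x y : V)
    (hrot : IsRotationAt G T T' x y)
    (P P' : RTree V) (hP : IsProjOn T U P) (hP' : IsProjOn T' U P') :
    ((x ∈ U ∧ y ∈ U) → IsRotationAt (restrictG G ↑U) P P' x y) ∧
    ((x ∉ U ∨ y ∉ U) → P' = P) := by
  refine ⟨fun ⟨hxU, hyU⟩ => ?_, fun hout => ?_⟩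
  · refine ⟨hP.parent_eq_some_of_parent hyU hxU hrot.1, by rw [hP'.1, hP.1, hrot.2.1],
      hrot.proj_parent_child hP hP' hxU hyU, hP'.parent_eq_some_of_parent hxU hyU hrot.2.2.2.1,
      fun z _ hz => ?_, fun z hzy hzx hz => hrot.proj_parent_of_ne hP hP' hxU hyU hzx hzy hz⟩
    have hs := hT.inStaySubtree_iff hG hU hP hrot.1 hxU hz
    exact ⟨fun h => hrot.proj_parent_of_not_inStaySubtree hP hP' hxU hz fun h' => hs.mp h' h,
      fun h => hrot.proj_parent_of_inStaySubtree hP hP' hyU hz (hs.mpr h)⟩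
  · exact hP.eq_of_strictAnc_iff hP' hrot.2.1 fun u hu v hv =>
      hrot.rotated_strictAnc_iff_of_not_mem hG hT hU hout hu hv

/-- projections commute with rotations. -/
theorem projection_rotation {V : Type} [Fintype V] [DecidableEq V]
    (G : SimpleGraph V) (hG : G.IsTree)
    (T T' : RTree V) (hT : IsSTG G T)
    (U : Finset V) (hU : (G.induce (↑U : Set V)).Connected)
    (x y : V) (hxy : T.parent y = some x)
    (hrot : IsRotationAt G T T' x y)
    (P P' : RTree V) (hP : IsProjOn T U P) (hP' : IsProjOn T' U P') :
    ((x ∈ U ∧ y ∈ U) → IsRotationAt (restrictG G ↑U) P P' x y) ∧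
    ((x ∉ U ∨ y ∉ U) → P' = P) :=
  projection_rotation_general G hG T T' hT U hU x y hrot P P' hP hP'
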